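/- Let B be an exact Krull–Schmidt Frobenius k-category whose stable category B̄ has finite-dimensional Hom-spaces, and let C be a functorially finite maximal (d−1)-orthogonal subcategory with d ≥ 2 and C̄[d] = C̄. Then for every M ∈ mod-C̄, Tor^C_i(M, C̄) = 0 for all i ≠ 0, d+1. -/

import Mathlib

open CategoryTheory CategoryTheory.Limits

universe v u

/-- Bundled data of an exact Krull–Schmidt Frobenius `k`-category: an additive
`k`-linear category equipped with a class of admissible short exact sequences,
a class of projective(-injective) objects satisfying the usual lifting
properties on both sides (the Frobenius property), chosen projective covers
with syzygies and injective envelopes with cosyzygies (enough projectives and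
enough injectives), the Krull--Schmidt property, and Hom-finiteness of the
stable category (Hom's modulo maps factoring through projectives). -/
structure FrobeniusSetup (k : Type) [Field k] (B : Type u) [Category.{v} B] [Preadditive B]
    [CategoryTheory.Linear k B] [HasFiniteBiproducts B] [HasBinaryBiproducts B] : Type (max u v) where
  /-- the admissible short exact sequences `0 → X → Y → Z → 0` of the exact structure -/
  IsSES : ∀ {X Y Z : B}, (X ⟶ Y) → (Y ⟶ Z) → Prop
  /-- the projective (equivalently injective) objects -/
  Proj : B → Prop
  ses_zero : ∀ {X Y Z : B} (f : X ⟶ Y) (g : Y ⟶ Z), IsSES f g → f ≫ g = 0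
  /-- in an admissible short exact sequence, `f` is a kernel of `g` -/
  ses_ker : ∀ {X Y Z : B} (f : X ⟶ Y) (g : Y ⟶ Z), IsSES f g →
      ∀ {W : B} (u : W ⟶ Y), u ≫ g = 0 → ∃! v : W ⟶ X, v ≫ f = u
  /-- in an admissible short exact sequence, `g` is a cokernel of `f` -/
  ses_coker : ∀ {X Y Z : B} (f : X ⟶ Y) (g : Y ⟶ Z), IsSES f g →
      ∀ {W : B} (u : Y ⟶ W), f ≫ u = 0 → ∃! v : Z ⟶ W, g ≫ v = u
  /-- admissible short exact sequences are closed under isomorphism -/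
  ses_iso : ∀ {X Y Z X' Y' Z' : B} (f : X ⟶ Y) (g : Y ⟶ Z)
      (iX : X ≅ X') (iY : Y ≅ Y') (iZ : Z ≅ Z') (f' : X' ⟶ Y') (g' : Y' ⟶ Z'),
      IsSES f g → f ≫ iY.hom = iX.hom ≫ f' → g ≫ iZ.hom = iY.hom ≫ g' → IsSES f' g'
  /-- split exact sequences are admissible -/
  ses_split : ∀ X Y : B, IsSES (biprod.inl : X ⟶ X ⊞ Y) (biprod.snd : X ⊞ Y ⟶ Y)
  /-- the `Proj` objects are precisely the projective objects of the exact structure -/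
  proj_iff : ∀ P : B, Proj P ↔
      (∀ {X Y Z : B} (f : X ⟶ Y) (g : Y ⟶ Z), IsSES f g →
        ∀ h : P ⟶ Z, ∃ l : P ⟶ Y, l ≫ g = h)
  /-- the Frobenius property: `Proj` objects are precisely the injective objects -/
  inj_iff : ∀ P : B, Proj P ↔
      (∀ {X Y Z : B} (f : X ⟶ Y) (g : Y ⟶ Z), IsSES f g →
        ∀ h : X ⟶ P, ∃ l : Y ⟶ P, f ≫ l = h)
  /-- a chosen projective cover (enough projectives) -/
  P : B → B
  projP : ∀ X : B, Proj (P X)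
  pr : ∀ X : B, P X ⟶ X
  /-- the chosen syzygy -/
  syz : B → B
  syzMono : ∀ X : B, syz X ⟶ P X
  ses_syz : ∀ X : B, IsSES (syzMono X) (pr X)
  /-- a chosen injective envelope (enough injectives) -/
  I : B → B
  projI : ∀ X : B, Proj (I X)
  en : ∀ X : B, X ⟶ I X
  /-- the chosen cosyzygy, i.e. the suspension of the stable category -/
  cosyz : B → B
  cosyzEpi : ∀ X : B, I X ⟶ cosyz X
  ses_cosyz : ∀ X : B, IsSES (en X) (cosyzEpi X)
  /-- the Krull–Schmidt property: every object is a finite biproduct of objects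
  with local endomorphism rings -/
  krullSchmidt : ∀ X : B, ∃ (n : ℕ) (Y : Fin n → B),
      (∀ i, IsLocalRing (End (Y i))) ∧ Nonempty (X ≅ ⨁ Y)
  /-- Hom-finiteness of the stable category -/
  homFinite : ∀ X Y : B, FiniteDimensional k
      ((X ⟶ Y) ⧸ Submodule.span k
        {f : X ⟶ Y | ∃ (Q : B) (g : X ⟶ Q) (h : Q ⟶ Y), Proj Q ∧ f = g ≫ h})

namespace FrobeniusSetup

variable {k : Type} [Field k] {B : Type u} [Category.{v} B] [Preadditive B]
  [CategoryTheory.Linear k B] [HasFiniteBiproducts B] [HasBinaryBiproducts B] (S : FrobeniusSetup k B)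

/-- The ideal of maps factoring through a projective object. -/
def projIdeal (X Y : B) : Submodule k (X ⟶ Y) :=
  Submodule.span k {f : X ⟶ Y | ∃ (Q : B) (g : X ⟶ Q) (h : Q ⟶ Y), S.Proj Q ∧ f = g ≫ h}

/-- Stable Hom: morphisms in the stable category `B̄`. -/
def sHom (X Y : B) : Type v := (X ⟶ Y) ⧸ S.projIdeal X Y

noncomputable instance (X Y : B) : AddCommGroup (S.sHom X Y) :=
  inferInstanceAs (AddCommGroup ((X ⟶ Y) ⧸ S.projIdeal X Y))

noncomputable instance (X Y : B) : Module k (S.sHom X Y) :=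
  inferInstanceAs (Module k ((X ⟶ Y) ⧸ S.projIdeal X Y))

/-- The class of a morphism in the stable category. -/
def sMk {X Y : B} (f : X ⟶ Y) : S.sHom X Y := Submodule.Quotient.mk f

/-- Vanishing of the stable Hom-space `B̄(X,Y)`. -/
def sVanish (X Y : B) : Prop := S.projIdeal X Y = ⊤

/-- `X` and `Y` are isomorphic in the stable category `B̄`. -/
def StIso (X Y : B) : Prop :=
  ∃ (f : X ⟶ Y) (g : Y ⟶ X),
    f ≫ g - 𝟙 X ∈ S.projIdeal X X ∧ g ≫ f - 𝟙 Y ∈ S.projIdeal Y Y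

/-- The shift (suspension) `X[n]` in the stable category: iterated cosyzygies for
`n ≥ 0` and iterated syzygies for `n < 0`. -/
def shift : ℤ → B → B
  | Int.ofNat n, X => S.cosyz^[n] X
  | Int.negSucc n, X => S.syz^[n + 1] X

/-- `Ext^i_B(X,Y) = 0`, expressed via the standard identification
`Ext^i(X,Y) ≅ B̄(Ω^i X, Y)` for `i ≥ 1` valid in a Frobenius category. -/
def extVanish (i : ℕ) (X Y : B) : Prop := S.sVanish (S.syz^[i] X) Y

/-- `C` is a maximal `(d-1)`-orthogonal subcategory of `B`. -/
def MaxOrthogonal (C : Set B) (d : ℕ) : Prop :=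
  (∀ X : B, X ∈ C ↔ ∀ i : ℕ, 1 ≤ i → i < d → ∀ C₀ ∈ C, S.extVanish i X C₀) ∧
  (∀ Y : B, Y ∈ C ↔ ∀ i : ℕ, 1 ≤ i → i < d → ∀ C₀ ∈ C, S.extVanish i C₀ Y)

/-- `C` is functorially finite in `B`: every object admits a right and a left
`C`-approximation. -/
def FunctoriallyFinite (_S : FrobeniusSetup k B) (C : Set B) : Prop :=
  (∀ X : B, ∃ C₀ ∈ C, ∃ f : C₀ ⟶ X, ∀ C₁ ∈ C, ∀ g : C₁ ⟶ X, ∃ h : C₁ ⟶ C₀, h ≫ f = g) ∧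
  (∀ X : B, ∃ C₀ ∈ C, ∃ f : X ⟶ C₀, ∀ C₁ ∈ C, ∀ g : X ⟶ C₁, ∃ h : C₀ ⟶ C₁, f ≫ h = g)

/-- The subcategory `E_j = {X | B̄(C, X[i]) = 0 for 1 ≤ i ≤ d-1, i ≠ j}`. -/
def Esub (C : Set B) (d j : ℕ) : Set B :=
  {X : B | ∀ i : ℕ, 1 ≤ i → i ≤ d - 1 → i ≠ j → ∀ C₀ ∈ C, S.sVanish C₀ (S.cosyz^[i] X)}

/-- `C̄[d] = C̄`: the `d`-th syzygy of every object of `C` again lies in `C`,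
up to stable isomorphism (i.e. up to projective summands). -/
def ShiftStable (C : Set B) (d : ℕ) : Prop :=
  ∀ C₀ ∈ C, ∃ C₁ ∈ C, S.StIso (S.syz^[d] C₀) C₁

end FrobeniusSetup
namespace FrobeniusSetup

section FunctorCats

variable {k : Type} [Field k] {B : Type u} [Category.{v} B] [Preadditive B]
  [CategoryTheory.Linear k B] [HasFiniteBiproducts B] [HasBinaryBiproducts B]
  (S : FrobeniusSetup k B)

/-- Postcomposition on stable Hom's. -/
noncomputable def sComp (X : B) {Y Z : B} (w : Y ⟶ Z) : S.sHom X Y →ₗ[k] S.sHom X Z :=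
  Submodule.mapQ _ _ (Linear.rightComp k X w) (by
    simp only [projIdeal, Submodule.span_le]
    rintro f ⟨Q, g, h, hQ, rfl⟩
    exact Submodule.mem_comap.2 (Submodule.subset_span ⟨Q, g, h ≫ w, hQ, by simp⟩))

/-- Precomposition on stable Hom's. -/
noncomputable def sPre {W X : B} (u : W ⟶ X) (Y : B) : S.sHom X Y →ₗ[k] S.sHom W Y :=
  Submodule.mapQ _ _ (Linear.leftComp k Y u) (by
    simp only [projIdeal, Submodule.span_le]
    rintro f ⟨Q, g, h, hQ, rfl⟩
    exact Submodule.mem_comap.2 (Submodule.subset_span ⟨Q, u ≫ g, h, hQ, by simp⟩))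

@[simp] lemma sComp_mk (X : B) {Y Z : B} (w : Y ⟶ Z) (f : X ⟶ Y) :
    S.sComp X w (S.sMk f) = S.sMk (f ≫ w) := rfl

@[simp] lemma sPre_mk {W X : B} (u : W ⟶ X) (Y : B) (f : X ⟶ Y) :
    S.sPre u Y (S.sMk f) = S.sMk (u ≫ f) := rfl

variable (CC : Set B)

/-- The restriction to `C` of the representable functor `B(-,X)`; for `X ∈ C`
these are exactly the projective objects of `mod-C`. -/
def LinRep (X : B) : (ObjectProperty.FullSubcategory (· ∈ CC))ᵒᵖ ⥤ ModuleCat k :=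
  (ObjectProperty.ι (· ∈ CC)).op ⋙ (linearYoneda k B).obj X

/-- The natural transformation `B(-,X) ⟶ B(-,Y)` induced by `w : X ⟶ Y`. -/
def lMap {X Y : B} (w : X ⟶ Y) : LinRep (k := k) CC X ⟶ LinRep CC Y :=
  Functor.whiskerLeft (ObjectProperty.ι (· ∈ CC)).op
    ((linearYoneda k B).map w)

/-- The restriction to `C̄` of the stable representable functor `B̄(-,X)`. -/
noncomputable def SRep (X : B) : (ObjectProperty.FullSubcategory (· ∈ CC))ᵒᵖ ⥤ ModuleCat k where
  obj c := ModuleCat.of k (S.sHom c.unop.obj X)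
  map {c c'} u := ModuleCat.ofHom (S.sPre (u.unop.hom : c'.unop.obj ⟶ c.unop.obj) X)
  map_id c := by
    ext x
    obtain ⟨f, rfl⟩ := Submodule.Quotient.mk_surjective _ x
    show S.sMk ((𝟙 c.unop.obj : c.unop.obj ⟶ c.unop.obj) ≫ f) = S.sMk f
    rw [Category.id_comp]
  map_comp {c c' c''} u v := by
    ext x
    obtain ⟨f, rfl⟩ := Submodule.Quotient.mk_surjective _ x
    show S.sMk (((v.unop.hom : c''.unop.obj ⟶ c'.unop.obj) ≫
        (u.unop.hom : c'.unop.obj ⟶ c.unop.obj)) ≫ f)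
      = S.sMk ((v.unop.hom : c''.unop.obj ⟶ c'.unop.obj) ≫
        ((u.unop.hom : c'.unop.obj ⟶ c.unop.obj) ≫ f))
    rw [Category.assoc]

/-- The natural transformation `B̄(-,X) ⟶ B̄(-,Y)` induced by `w : X ⟶ Y`. -/
noncomputable def sMap {X Y : B} (w : X ⟶ Y) : S.SRep CC X ⟶ S.SRep CC Y where
  app c := ModuleCat.ofHom (S.sComp c.unop.obj w)
  naturality {c c'} u := by
    ext x
    obtain ⟨f, rfl⟩ := Submodule.Quotient.mk_surjective _ x
    show S.sMk (((u.unop.hom : c'.unop.obj ⟶ c.unop.obj) ≫ f) ≫ w)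
      = S.sMk ((u.unop.hom : c'.unop.obj ⟶ c.unop.obj) ≫ (f ≫ w))
    rw [Category.assoc]

/-- A functor on `C` underlies a functor on the stable category `C̄` iff it kills
all maps factoring through a projective object of `B`. -/
def KillsProj (M : (ObjectProperty.FullSubcategory (· ∈ CC))ᵒᵖ ⥤ ModuleCat k) : Prop :=
  ∀ (c c' : (ObjectProperty.FullSubcategory (· ∈ CC))ᵒᵖ) (u : c ⟶ c'),
    (u.unop.hom : c'.unop.obj ⟶ c.unop.obj) ∈ S.projIdeal c'.unop.obj c.unop.obj → M.map u = 0

/-- `M` is a finitely presented k-linear contravariant functor on the stable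
category `C̄`, i.e. an object of `mod-C̄`: it admits a projective presentation
`B̄(-,C₁) → B̄(-,C₀) → M → 0` by (restricted) stable representables. -/
def IsFPStable (M : (ObjectProperty.FullSubcategory (· ∈ CC))ᵒᵖ ⥤ ModuleCat k) : Prop :=
  ∃ (C₁ C₀ : B), C₁ ∈ CC ∧ C₀ ∈ CC ∧
    ∃ (φ : S.SRep CC C₁ ⟶ S.SRep CC C₀) (ε : S.SRep CC C₀ ⟶ M),
      ∀ c, Function.Surjective (ε.app c) ∧ Function.Exact (φ.app c) (ε.app c)

/-- `M` is a finitely presented k-linear contravariant functor on `C`,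
i.e. an object of `mod-C`. -/
def IsFP (M : (ObjectProperty.FullSubcategory (· ∈ CC))ᵒᵖ ⥤ ModuleCat k) : Prop :=
  ∃ (C₁ C₀ : B), C₁ ∈ CC ∧ C₀ ∈ CC ∧
    ∃ (φ : LinRep (k := k) CC C₁ ⟶ LinRep CC C₀) (ε : LinRep (k := k) CC C₀ ⟶ M),
      ∀ c, Function.Surjective (ε.app c) ∧ Function.Exact (φ.app c) (ε.app c)

end FunctorCats

end FrobeniusSetup

/-!
Let `X₀ ← X₁ ← ⋯ ← X_{d+1}` be the resolution. A stable cycle `f : c ⟶ X_{n+1}` becomes an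
honest cycle after subtracting a map through the injective hull `c ⟶ I c`, and such a correction
exists once the obstruction, a cycle `Ω⁻¹c ⟶ X_{n-1}`, lifts. Lifting cycles out of `Ω⁻ˡ c`
reduces in the same way to `Ω⁻ˡ⁻¹ c`, and works whenever `B̄(Ω⁻ˡ c, X_m) = 0`. For
`1 ≤ l ≤ d - 1` this vanishing holds: `C̄[d] = C̄` turns `B̄(Ω⁻ˡ c, c')` into
`B̄(Ω^{d-l} c, c'')` with `c'' ∈ C`, an `Ext^{d-l}` between objects of `C`. Projective objects
lie in `C` and are killed by `M`, so cycles out of them lift in every degree.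
-/

namespace FrobeniusSetup

section StableVanishing

variable {k : Type} [Field k] {B : Type u} [Category.{v} B] [Preadditive B]
  [CategoryTheory.Linear k B] [HasFiniteBiproducts B] [HasBinaryBiproducts B]
  (S : FrobeniusSetup k B)

lemma mem_projIdeal_of_factor {X Y Q : B} (hQ : S.Proj Q) (a : X ⟶ Q) (b : Q ⟶ Y) :
    a ≫ b ∈ S.projIdeal X Y :=
  Submodule.subset_span ⟨Q, a, b, hQ, rfl⟩

lemma sVanish_of_proj_left {X Y : B} (hX : S.Proj X) : S.sVanish X Y :=
  eq_top_iff.mpr fun f _ => by simpa using S.mem_projIdeal_of_factor hX (𝟙 X) f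

lemma sVanish_of_proj_right {X Y : B} (hY : S.Proj Y) : S.sVanish X Y :=
  eq_top_iff.mpr fun f _ => by simpa using S.mem_projIdeal_of_factor hY f (𝟙 Y)

lemma comp_mem_projIdeal_left {W X Y : B} (u : W ⟶ X) {p : X ⟶ Y}
    (hp : p ∈ S.projIdeal X Y) : u ≫ p ∈ S.projIdeal W Y := by
  refine Submodule.span_induction ?_ ?_ ?_ ?_ hp
  · rintro _ ⟨Q, a, b, hQ, rfl⟩
    simpa using S.mem_projIdeal_of_factor hQ (u ≫ a) b
  · simp
  · intro p q _ _ hp hq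
    simpa using add_mem hp hq
  · intro a p _ hp
    simpa using Submodule.smul_mem _ a hp

lemma comp_mem_projIdeal_right {X Y Z : B} {p : X ⟶ Y} (w : Y ⟶ Z)
    (hp : p ∈ S.projIdeal X Y) : p ≫ w ∈ S.projIdeal X Z := by
  refine Submodule.span_induction ?_ ?_ ?_ ?_ hp
  · rintro _ ⟨Q, a, b, hQ, rfl⟩
    simpa using S.mem_projIdeal_of_factor hQ a (b ≫ w)
  · simp
  · intro p q _ _ hp hq
    simpa using add_mem hp hq
  · intro a p _ hp
    simpa using Submodule.smul_mem _ a hp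

lemma eq_zero_of_isSES {X Y Z W : B} {m : X ⟶ Y} {e : Y ⟶ Z} (h : S.IsSES m e)
    {u : Z ⟶ W} (hu : e ≫ u = 0) : u = 0 := by
  obtain ⟨_, _, huniq⟩ := S.ses_coker m e h (0 : Y ⟶ W) (by simp)
  rw [huniq u hu, huniq 0 (by simp)]

/-- Projective objects are injective, so maps in the projective ideal extend along admissible
monomorphisms. -/
lemma exists_eq_comp_of_mem_projIdeal {X J Z Y : B} {m : X ⟶ J} {e : J ⟶ Z}
    (h : S.IsSES m e) {p : X ⟶ Y} (hp : p ∈ S.projIdeal X Y) : ∃ t : J ⟶ Y, p = m ≫ t := by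
  refine Submodule.span_induction ?_ ?_ ?_ ?_ hp
  · rintro _ ⟨Q, a, b, hQ, rfl⟩
    obtain ⟨l, hl⟩ := (S.inj_iff Q).mp hQ m e h a
    exact ⟨l ≫ b, by rw [← Category.assoc, hl]⟩
  · exact ⟨0, by simp⟩
  · rintro p q _ _ ⟨t, rfl⟩ ⟨t', rfl⟩
    exact ⟨t + t', by simp⟩
  · rintro a p _ ⟨t, rfl⟩
    exact ⟨a • t, by simp⟩

lemma sVanish_of_stIso_right {X Y Y' : B} (hi : S.StIso Y Y') (h : S.sVanish X Y') :
    S.sVanish X Y := by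
  obtain ⟨f, f', hff', -⟩ := hi
  refine eq_top_iff.mpr fun u _ => ?_
  have hu : u = (u ≫ f) ≫ f' - u ≫ (f ≫ f' - 𝟙 Y) := by simp
  rw [hu]
  exact sub_mem (S.comp_mem_projIdeal_right f' (h ▸ trivial))
    (S.comp_mem_projIdeal_left u hff')

/-- A map `Z₁ ⟶ Z₂` lifts to `J₁ ⟶ J₂` and restricts to `X₁ ⟶ X₂`; a factorisation of the
restriction through `J₁` corrects the lift so that it vanishes on `X₁` and hence factors through
`J₂ ⟶ Z₂`. -/
lemma sVanish_of_isSES {X₁ J₁ Z₁ X₂ J₂ Z₂ : B} {m₁ : X₁ ⟶ J₁} {e₁ : J₁ ⟶ Z₁}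
    {m₂ : X₂ ⟶ J₂} {e₂ : J₂ ⟶ Z₂} (h₁ : S.IsSES m₁ e₁) (h₂ : S.IsSES m₂ e₂)
    (hJ₁ : S.Proj J₁) (hJ₂ : S.Proj J₂) (h : S.sVanish X₁ X₂) : S.sVanish Z₁ Z₂ := by
  refine eq_top_iff.mpr fun u _ => ?_
  obtain ⟨L, hL⟩ := (S.proj_iff J₁).mp hJ₁ m₂ e₂ h₂ (e₁ ≫ u)
  obtain ⟨v, hv, -⟩ := S.ses_ker m₂ e₂ h₂ (m₁ ≫ L)
    (by rw [Category.assoc, hL, ← Category.assoc, S.ses_zero _ _ h₁, zero_comp])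
  obtain ⟨t, rfl⟩ := S.exists_eq_comp_of_mem_projIdeal h₁ (h ▸ trivial : v ∈ S.projIdeal X₁ X₂)
  obtain ⟨w, hw, -⟩ := S.ses_coker m₁ e₁ h₁ (L - t ≫ m₂)
    (by rw [Preadditive.comp_sub, ← hv, Category.assoc, sub_self])
  have hu : u = w ≫ e₂ := by
    refine sub_eq_zero.mp (S.eq_zero_of_isSES h₁ ?_)
    rw [Preadditive.comp_sub, ← Category.assoc, hw, Preadditive.sub_comp, hL, Category.assoc,
      S.ses_zero _ _ h₂, comp_zero, sub_zero, sub_self]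
  exact hu ▸ S.mem_projIdeal_of_factor hJ₂ w e₂

lemma sVanish_cosyz_iterate (j : ℕ) {X Y : B} (h : S.sVanish X (S.syz^[j] Y)) :
    S.sVanish (S.cosyz^[j] X) Y := by
  induction j generalizing Y with
  | zero => exact h
  | succ j ih =>
    rw [Function.iterate_succ_apply']
    exact S.sVanish_of_isSES (S.ses_cosyz _) (S.ses_syz Y) (S.projI _) (S.projP Y) (ih h)

lemma sVanish_of_sVanish_syz_iterate (n : ℕ) {X Y : B}
    (h : S.sVanish (S.syz^[n] X) (S.syz^[n] Y)) : S.sVanish X Y := by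
  induction n generalizing X Y with
  | zero => exact h
  | succ n ih =>
    exact S.sVanish_of_isSES (S.ses_syz X) (S.ses_syz Y) (S.projP X) (S.projP Y) (ih h)

end StableVanishing

section MaxOrthogonal

variable {k : Type} [Field k] {B : Type u} [Category.{v} B] [Preadditive B]
  [CategoryTheory.Linear k B] [HasFiniteBiproducts B] [HasBinaryBiproducts B]

lemma MaxOrthogonal.mem_of_proj {S : FrobeniusSetup k B} {C : Set B} {d : ℕ}
    (hmax : S.MaxOrthogonal C d) {Q : B} (hQ : S.Proj Q) : Q ∈ C :=
  (hmax.2 Q).mpr fun _ _ _ _ _ => S.sVanish_of_proj_right hQ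

/-- `B̄(Ω⁻ʲ X, X') ≅ B̄(Ω^{d-j} X, Ω^d X')`, and `Ω^d X'` is stably an object of `C`. -/
lemma MaxOrthogonal.sVanish_cosyz_iterate {S : FrobeniusSetup k B} {C : Set B} {d : ℕ}
    (hmax : S.MaxOrthogonal C d) (hstab : S.ShiftStable C d) {X X' : B} (hX : X ∈ C) (hX' : X' ∈ C) {j : ℕ} (hj : 1 ≤ j)
    (hjd : j ≤ d - 1) : S.sVanish (S.cosyz^[j] X) X' := by
  obtain ⟨C₁, hC₁, hiso⟩ := hstab X' hX'
  have hext : S.sVanish (S.syz^[d - j] X) C₁ :=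
    (hmax.1 X).mp hX (d - j) (by omega) (by omega) C₁ hC₁
  have hshift : S.sVanish (S.syz^[d - j] X) (S.syz^[d - j] (S.syz^[j] X')) := by
    rw [← Function.iterate_add_apply, Nat.sub_add_cancel (by omega)]
    exact S.sVanish_of_stIso_right hiso hext
  exact S.sVanish_cosyz_iterate j (S.sVanish_of_sVanish_syz_iterate (d - j) hshift)

end MaxOrthogonal

section Resolutions

variable {B : Type u} [Category.{v} B] [Preadditive B] {X : ℕ → B} (g : ∀ n, X (n + 1) ⟶ X n)

/-- Degree `0` has no cycle condition: for maps out of projective objects, being killed by the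
augmentation `X 0 ⟶ M` is automatic. -/
def IsCycle {Y : B} : ∀ n, (Y ⟶ X n) → Prop
  | 0, _ => True
  | n + 1, r => r ≫ g n = 0

def LiftsCycles (Y : B) (n : ℕ) : Prop :=
  ∀ r : Y ⟶ X n, IsCycle g n r → ∃ r' : Y ⟶ X (n + 1), r' ≫ g n = r

end Resolutions

section Lifting

variable {k : Type} [Field k] {B : Type u} [Category.{v} B] [Preadditive B]
  [CategoryTheory.Linear k B] [HasFiniteBiproducts B] [HasBinaryBiproducts B]
  (S : FrobeniusSetup k B) {X : ℕ → B} (g : ∀ n, X (n + 1) ⟶ X n)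

/-- Write `r = en ≫ β`. The part of `β ≫ g` that does not vanish on `Y` factors through
`Ω⁻¹Y` as a cycle; subtracting a lift of it from `β` leaves a cycle on `I Y`. -/
lemma exists_en_comp_lift {n : ℕ} (hcomplex : ∀ j, j + 2 ≤ n → g (j + 1) ≫ g j = 0) {Y : B}
    (hI : LiftsCycles g (S.I Y) n) (hcosyz : ∀ m, n = m + 1 → LiftsCycles g (S.cosyz Y) m)
    {r : Y ⟶ X n} (hr : IsCycle g n r) (hrp : r ∈ S.projIdeal Y (X n)) :
    ∃ σ : S.I Y ⟶ X (n + 1), S.en Y ≫ σ ≫ g n = r := by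
  obtain ⟨β, rfl⟩ := S.exists_eq_comp_of_mem_projIdeal (S.ses_cosyz Y) hrp
  cases n with
  | zero =>
    obtain ⟨σ, hσ⟩ := hI β trivial
    exact ⟨σ, by rw [hσ]⟩
  | succ m =>
    obtain ⟨ρ, hρ, -⟩ := S.ses_coker _ _ (S.ses_cosyz Y) (β ≫ g m)
      (by rw [← Category.assoc]; exact hr)
    have hρ_cycle : IsCycle g m ρ := by
      cases m with
      | zero => trivial
      | succ m =>
        refine S.eq_zero_of_isSES (S.ses_cosyz Y) ?_
        rw [← Category.assoc, hρ, Category.assoc, hcomplex m le_rfl, comp_zero]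
    obtain ⟨ρ', hρ'⟩ := hcosyz m rfl ρ hρ_cycle
    obtain ⟨σ, hσ⟩ := hI (β - S.cosyzEpi Y ≫ ρ')
      (by simp only [IsCycle, Preadditive.sub_comp, Category.assoc, hρ', hρ, sub_self])
    refine ⟨σ, ?_⟩
    rw [hσ, Preadditive.comp_sub, ← Category.assoc, S.ses_zero _ _ (S.ses_cosyz Y), zero_comp,
      sub_zero]

lemma liftsCycles_of_sVanish {n : ℕ} (hcomplex : ∀ j, j + 2 ≤ n → g (j + 1) ≫ g j = 0)
    {Y : B} (hY : S.sVanish Y (X n)) (hI : LiftsCycles g (S.I Y) n)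
    (hcosyz : ∀ m, n = m + 1 → LiftsCycles g (S.cosyz Y) m) : LiftsCycles g Y n := by
  intro r hr
  obtain ⟨σ, hσ⟩ := S.exists_en_comp_lift g hcomplex hI hcosyz hr (hY ▸ trivial)
  exact ⟨S.en Y ≫ σ, by rw [Category.assoc, hσ]⟩

lemma liftsCycles_of_sVanish_cosyz_iterate {n : ℕ}
    (hcomplex : ∀ j, j + 2 ≤ n → g (j + 1) ≫ g j = 0)
    (hproj : ∀ J, S.Proj J → ∀ m ≤ n, LiftsCycles g J m) {Y : B}
    (hY : ∀ l m, l + m = n → S.sVanish (S.cosyz^[l] Y) (X m)) : LiftsCycles g Y n := by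
  induction n generalizing Y with
  | zero =>
    exact S.liftsCycles_of_sVanish g hcomplex (hY 0 0 rfl) (hproj _ (S.projI Y) 0 le_rfl)
      (fun _ h => by omega)
  | succ n ih =>
    refine S.liftsCycles_of_sVanish g hcomplex (hY 0 (n + 1) (by omega))
      (hproj _ (S.projI Y) _ le_rfl) ?_
    rintro m ⟨⟩
    exact ih (fun j hj => hcomplex j (by omega)) (fun J hJ m hm => hproj J hJ m (by omega))
      (fun l m hlm => hY (l + 1) m (by omega))

lemma exact_sComp_of_liftsCycles {n : ℕ} (hcomplex : ∀ j, j ≤ n → g (j + 1) ≫ g j = 0) {Y : B}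
    (hY : LiftsCycles g Y (n + 1)) (hI : LiftsCycles g (S.I Y) n)
    (hcosyz : ∀ m, n = m + 1 → LiftsCycles g (S.cosyz Y) m) :
    Function.Exact (S.sComp Y (g (n + 1))) (S.sComp Y (g n)) := by
  intro y
  constructor
  · obtain ⟨f, rfl⟩ := Submodule.Quotient.mk_surjective _ y
    intro hf
    have hfp : f ≫ g n ∈ S.projIdeal Y (X n) := (Submodule.Quotient.mk_eq_zero _).mp hf
    have hf_cycle : IsCycle g n (f ≫ g n) := by
      cases n with
      | zero => trivial
      | succ m => simp only [IsCycle, Category.assoc, hcomplex m (by omega), comp_zero]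
    obtain ⟨σ, hσ⟩ := S.exists_en_comp_lift g (fun j hj => hcomplex j (by omega)) hI hcosyz
      hf_cycle hfp
    obtain ⟨h, hh⟩ := hY (f - S.en Y ≫ σ) (by simp only [IsCycle, Preadditive.sub_comp,
      Category.assoc, hσ, sub_self])
    refine ⟨S.sMk h, (Submodule.Quotient.eq _).mpr ?_⟩
    show h ≫ g (n + 1) - f ∈ _
    rw [hh, sub_sub_cancel_left]
    exact neg_mem (S.mem_projIdeal_of_factor (S.projI Y) _ _)
  · rintro ⟨x, rfl⟩
    obtain ⟨h, rfl⟩ := Submodule.Quotient.mk_surjective _ x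
    show S.sMk ((h ≫ g (n + 1)) ≫ g n) = 0
    rw [Category.assoc, hcomplex n le_rfl, comp_zero]
    exact Submodule.Quotient.mk_zero _

end Lifting

section Representables

variable {k : Type} [Field k] {B : Type u} [Category.{v} B] [Preadditive B]
  [CategoryTheory.Linear k B] {C : Set B}

lemma IsFPStable.subsingleton_obj [HasFiniteBiproducts B] [HasBinaryBiproducts B]
    {S : FrobeniusSetup k B}
    {M : (ObjectProperty.FullSubcategory (· ∈ C))ᵒᵖ ⥤ ModuleCat k} (hM : S.IsFPStable C M)
    {J : B} (hJ : J ∈ C) (hP : S.Proj J) :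
    Subsingleton (M.obj (Opposite.op ⟨J, hJ⟩)) := by
  obtain ⟨_, C₀, _, _, _, ε, hε⟩ := hM
  have : Subsingleton ((S.SRep C C₀).obj (Opposite.op ⟨J, hJ⟩)) :=
    Submodule.Quotient.subsingleton_iff.mpr (S.sVanish_of_proj_left hP)
  exact (hε _).1.subsingleton

lemma comp_eq_zero_of_exact_lMap {Y Z W : B} (hY : Y ∈ C) {f : Y ⟶ Z} {f' : Z ⟶ W}
    (h : Function.Exact ((lMap (k := k) C f).app (Opposite.op ⟨Y, hY⟩))
      ((lMap (k := k) C f').app (Opposite.op ⟨Y, hY⟩))) : f ≫ f' = 0 := by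
  have h' : (𝟙 Y ≫ f) ≫ f' = 0 := h.apply_apply_eq_zero (𝟙 Y)
  simpa using h'

variable {X : ℕ → B} (g : ∀ n, X (n + 1) ⟶ X n)

lemma liftsCycles_succ_of_exact {c : (ObjectProperty.FullSubcategory (· ∈ C))ᵒᵖ} {n : ℕ}
    (h : Function.Exact ((lMap (k := k) C (g (n + 1))).app c) ((lMap (k := k) C (g n)).app c)) :
    LiftsCycles g c.unop.obj (n + 1) :=
  fun r hr => (h r).mp hr

lemma liftsCycles_zero_of_exact {c : (ObjectProperty.FullSubcategory (· ∈ C))ᵒᵖ}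
    {M : (ObjectProperty.FullSubcategory (· ∈ C))ᵒᵖ ⥤ ModuleCat k} [Subsingleton (M.obj c)]
    {ε : LinRep (k := k) C (X 0) ⟶ M}
    (h : Function.Exact ((lMap (k := k) C (g 0)).app c) (ε.app c)) :
    LiftsCycles g c.unop.obj 0 :=
  fun r _ => (h r).mp (Subsingleton.elim _ _)

end Representables

end FrobeniusSetup

open FrobeniusSetup in
/-- `Tor^C_i(M, C̄)` is computed by applying `- ⊗_C C̄`, i.e. `B(-,X) ↦ B̄(-,X)`, to a projective
resolution of `M` in `mod-C` by representables `B(-,C_i)`, `C_i ∈ C`; its vanishing for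
`1 ≤ i ≤ d` is exactness of the induced stable complex at the spots `1, …, d`, and for
`i ≥ d + 2` the complex is zero. -/
theorem stmt9_tor_vanishing_general
    {k : Type} [Field k] {B : Type u} [Category.{v} B] [Preadditive B]
    [CategoryTheory.Linear k B] [HasFiniteBiproducts B] [HasBinaryBiproducts B]
    (S : FrobeniusSetup k B) (d : ℕ) (C : Set B)
    (hmax : S.MaxOrthogonal C d)
    (hstab : S.ShiftStable C d)
    (M : (ObjectProperty.FullSubcategory (· ∈ C))ᵒᵖ ⥤ ModuleCat k) (hM : S.IsFPStable C M)
    (Cobj : ℕ → B) (hC : ∀ i, i ≤ d + 1 → Cobj i ∈ C)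
    (g : ∀ i : ℕ, Cobj (i + 1) ⟶ Cobj i) (ε : LinRep (k := k) C (Cobj 0) ⟶ M)
    (hres : ∀ c, Function.Surjective (ε.app c) ∧
      Function.Exact ((lMap (k := k) C (g 0)).app c) (ε.app c) ∧
      (∀ i, i < d → Function.Exact ((lMap (k := k) C (g (i + 1))).app c)
        ((lMap (k := k) C (g i)).app c)) ∧
      Function.Injective ((lMap (k := k) C (g d)).app c)) :
    ∀ c : (ObjectProperty.FullSubcategory (· ∈ C))ᵒᵖ, ∀ i, i < d →
      Function.Exact ((S.sMap C (g (i + 1))).app c) ((S.sMap C (g i)).app c) := by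
  have hcomplex : ∀ j, j < d → g (j + 1) ≫ g j = 0 := fun j hj =>
    comp_eq_zero_of_exact_lMap (hC (j + 2) (by omega)) ((hres _).2.2.1 j hj)
  have hproj : ∀ J, S.Proj J → ∀ m ≤ d, LiftsCycles g J m := by
    intro J hJ m hm
    have hJC := hmax.mem_of_proj hJ
    cases m with
    | zero =>
      have := hM.subsingleton_obj hJC hJ
      exact liftsCycles_zero_of_exact (c := Opposite.op ⟨J, hJC⟩) g (hres _).2.1
    | succ m =>
      exact liftsCycles_succ_of_exact (c := Opposite.op ⟨J, hJC⟩) g ((hres _).2.2.1 m (by omega))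
  intro c i hi
  refine S.exact_sComp_of_liftsCycles g (fun j hj => hcomplex j (by omega))
    (liftsCycles_succ_of_exact g ((hres c).2.2.1 i hi)) (hproj _ (S.projI _) i hi.le) ?_
  rintro m rfl
  refine S.liftsCycles_of_sVanish_cosyz_iterate g (fun j hj => hcomplex j (by omega))
    (fun J hJ m' hm' => hproj J hJ m' (by omega)) fun l m' hlm => ?_
  exact hmax.sVanish_cosyz_iterate hstab c.unop.property (hC m' (by omega)) (j := l + 1)
    (by omega) (by omega)

open FrobeniusSetup in
/-- Theorem 2.5(3).  With `C` a functorially finite maximal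
`(d-1)`-orthogonal subcategory, `d ≥ 2`, `C̄[d] = C̄`:  for every `M ∈ mod-C̄`
one has `Tor^C_i(M, C̄) = 0` for all `i ≠ 0, d+1`.  The groups `Tor^C_i(M,C̄)`
are computed by applying `- ⊗_C C̄` (i.e. `B(-,X) ↦ B̄(-,X)`) to a projective
resolution of `M` in `mod-C`; by Theorem 2.5(1) such resolutions of length
`d+2` by representables `B(-,C_i)`, `C_i ∈ C`, exist, and we quantify over all
of them.  Vanishing of `Tor_i` for `1 ≤ i ≤ d` is exactness of the induced
stable complex at the spots `1,…,d` (for `i ≥ d+2` the complex vanishes, so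
`Tor_i = 0` is automatic there, and `Tor_{d+1}` is the kernel at the top). -/
theorem stmt9_tor_vanishing
    {k : Type} [Field k] {B : Type u} [Category.{v} B] [Preadditive B]
    [CategoryTheory.Linear k B] [HasFiniteBiproducts B] [HasBinaryBiproducts B]
    (S : FrobeniusSetup k B) (d : ℕ) (hd : 2 ≤ d) (C : Set B)
    (hff : S.FunctoriallyFinite C) (hmax : S.MaxOrthogonal C d)
    (hstab : S.ShiftStable C d)
    (M : (ObjectProperty.FullSubcategory (· ∈ C))ᵒᵖ ⥤ ModuleCat k) (hM : S.IsFPStable C M)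
    (Cobj : ℕ → B) (hC : ∀ i, i ≤ d + 1 → Cobj i ∈ C)
    (g : ∀ i : ℕ, Cobj (i + 1) ⟶ Cobj i) (ε : LinRep (k := k) C (Cobj 0) ⟶ M)
    (hres : ∀ c, Function.Surjective (ε.app c) ∧
      Function.Exact ((lMap (k := k) C (g 0)).app c) (ε.app c) ∧
      (∀ i, i < d → Function.Exact ((lMap (k := k) C (g (i + 1))).app c)
        ((lMap (k := k) C (g i)).app c)) ∧
      Function.Injective ((lMap (k := k) C (g d)).app c)) :
    ∀ c : (ObjectProperty.FullSubcategory (· ∈ C))ᵒᵖ, ∀ i, i < d →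
      Function.Exact ((S.sMap C (g (i + 1))).app c) ((S.sMap C (g i)).app c) :=
  stmt9_tor_vanishing_general S d C hmax hstab M hM Cobj hC g ε hres
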